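/- arXiv:2407.17589 — 3 statements merged into one kernel-verified Lean document; each statement's English description precedes it below -/
import Mathlib

section
/- Let X ⊆ Z_+^n be S-convex. A vector x ∈ X is central in X (i.e., x does not strictly majorize any element of X) if and only if |x_i − x_j| < 2 for all i, j, i.e., |x_i − x_j| ≤ 1. -/
open Finset

/-- `x` majorizes `y` (integer vectors). -/
def majZ {n : ℕ} (x y : Fin n → ℤ) : Prop :=
  (∀ B : Finset (Fin n), ∃ A : Finset (Fin n),
      A.card = B.card ∧ ∑ i ∈ B, y i ≤ ∑ i ∈ A, x i) ∧
  ∑ i, x i = ∑ i, y i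

/-- strict majorization -/
def smajZ {n : ℕ} (x y : Fin n → ℤ) : Prop := majZ x y ∧ ¬ majZ y x

/-- A set of integer vectors is S-convex if it is closed under coordinate
permutations and under Robin Hood transfers between coordinates differing
by at least 2. -/
def SConvex {n : ℕ} (X : Set (Fin n → ℤ)) : Prop :=
  (∀ x ∈ X, ∀ π : Equiv.Perm (Fin n), (x ∘ π) ∈ X) ∧
  (∀ x ∈ X, ∀ i j : Fin n, 2 ≤ x i - x j →
    (x - Pi.single i 1 + Pi.single j 1) ∈ X)

/-- Swap lemma: replacing `q ∈ A` by `p ∉ A` keeps cardinality and shifts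
the sum by `y p - y q`. -/
lemma swap_sum {n : ℕ} (y : Fin n → ℤ) {A : Finset (Fin n)} {p q : Fin n}
    (hq : q ∈ A) (hp : p ∉ A) :
    (insert p (A.erase q)).card = A.card ∧
      ∑ i ∈ insert p (A.erase q), y i = ∑ i ∈ A, y i - y q + y p := by
  have hpe : p ∉ A.erase q := fun h => hp (Finset.mem_of_mem_erase h)
  constructor
  · rw [Finset.card_insert_of_notMem hpe, Finset.card_erase_of_mem hq]
    have : 1 ≤ A.card := Finset.card_pos.mpr ⟨q, hq⟩
    omega
  · rw [Finset.sum_insert hpe, Finset.sum_erase_eq_sub hq]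
    ring

/-- If `x ∈ X` has a gap of at least 2 between two coordinates, then the
Robin Hood transfer produces a member of `X` strictly majorized by `x`. -/
lemma gap_not_central {n : ℕ} (X : Set (Fin n → ℤ)) (hX : SConvex X)
    (x : Fin n → ℤ) (hx : x ∈ X) (i j : Fin n) (hij : 2 ≤ x i - x j) :
    ∃ y ∈ X, smajZ x y := by
  have hne : i ≠ j := by intro h; rw [h] at hij; omega
  set y : Fin n → ℤ := x - Pi.single i 1 + Pi.single j 1 with hy
  have hyX : y ∈ X := hX.2 x hx i j hij
  have hyval : ∀ k, y k = x k - (if k = i then 1 else 0) + (if k = j then 1 else 0) := by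
    intro k
    simp [hy, Pi.single_apply]
  have hyi : y i = x i - 1 := by rw [hyval]; simp [hne]
  have hyj : y j = x j + 1 := by rw [hyval]; simp [hne.symm]
  have hyk : ∀ k, k ≠ i → k ≠ j → y k = x k := by
    intro k h1 h2; rw [hyval]; simp [h1, h2]
  -- sum over any finset
  have hsum : ∀ B : Finset (Fin n), ∑ k ∈ B, y k =
      ∑ k ∈ B, x k - (if i ∈ B then 1 else 0) + (if j ∈ B then 1 else 0) := by
    intro B
    simp only [hyval, Finset.sum_add_distrib, Finset.sum_sub_distrib,
      Finset.sum_ite_eq', Finset.sum_ite_eq]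
  refine ⟨y, hyX, ⟨?_, ?_⟩, ?_⟩
  · -- majZ x y : partial sums clause
    intro B
    by_cases hjB : j ∈ B
    · by_cases hiB : i ∈ B
      · exact ⟨B, rfl, by rw [hsum]; simp [hiB, hjB]⟩
      · obtain ⟨hc, hs⟩ := swap_sum x hjB hiB
        refine ⟨insert i (B.erase j), hc, ?_⟩
        rw [hs, hsum]
        simp only [hiB, hjB, if_true, if_false]
        omega
    · exact ⟨B, rfl, by rw [hsum]; simp [hjB]; split <;> omega⟩
  · -- equal total sums
    have := hsum Finset.univ
    simp only [Finset.mem_univ, if_true] at this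
    omega
  · -- ¬ majZ y x
    intro hmaj
    set B : Finset (Fin n) := Finset.univ.filter (fun k => x i ≤ x k) with hB
    have hiB : i ∈ B := by simp [hB]
    have hjB : j ∉ B := by simp [hB]; omega
    obtain ⟨A, hAcard, hAle⟩ := hmaj.1 B
    set S : Finset (Fin n) := B.erase i with hS
    have hScard : S.card + 1 = B.card := by
      rw [hS, Finset.card_erase_of_mem hiB]
      have : 1 ≤ B.card := Finset.card_pos.mpr ⟨i, hiB⟩
      omega
    -- every element of S has y ≥ x i ; every element outside S has y ≤ x i - 1
    have hSin : ∀ k ∈ S, y k = x k ∧ x i ≤ x k := by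
      intro k hk
      have hki : k ≠ i := Finset.ne_of_mem_erase hk
      have hkB : k ∈ B := Finset.mem_of_mem_erase hk
      have hkj : k ≠ j := fun h => hjB (h ▸ hkB)
      have : x i ≤ x k := by simpa [hB] using hkB
      exact ⟨hyk k hki hkj, this⟩
    have hSout : ∀ k, k ∉ S → y k ≤ x i - 1 := by
      intro k hk
      by_cases hki : k = i
      · rw [hki, hyi]
      · have hkB : k ∉ B := fun h => hk (Finset.mem_erase.mpr ⟨hki, h⟩)
        have hxk : x k < x i := by
          by_contra hc
          exact hkB (by simp [hB]; omega)
        by_cases hkj : k = j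
        · rw [hkj, hyj]; omega
        · rw [hyk k hki hkj]; omega
    -- split A
    have hsplit : ∑ k ∈ A ∩ S, y k + ∑ k ∈ A \ S, y k = ∑ k ∈ A, y k :=
      Finset.sum_inter_add_sum_sdiff A S y
    have hcards : (A ∩ S).card + (A \ S).card = A.card :=
      Finset.card_inter_add_card_sdiff A S
    have hAScard : (A ∩ S).card ≤ S.card := Finset.card_le_card (Finset.inter_subset_right)
    have hd1 : 1 ≤ (A \ S).card := by omega
    -- bound the diff part
    have hdiffle : ∑ k ∈ A \ S, y k ≤ ((A \ S).card : ℤ) * (x i - 1) := by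
      calc ∑ k ∈ A \ S, y k ≤ ∑ _k ∈ A \ S, (x i - 1) :=
            Finset.sum_le_sum (fun k hk => hSout k (Finset.mem_sdiff.mp hk).2)
        _ = ((A \ S).card : ℤ) * (x i - 1) := by rw [Finset.sum_const]; ring
    -- the part of S missed by A
    have hmissed : ((S \ A).card : ℤ) * x i ≤ ∑ k ∈ S \ A, x k := by
      calc ((S \ A).card : ℤ) * x i = ∑ _k ∈ S \ A, x i := by rw [Finset.sum_const]; ring
        _ ≤ ∑ k ∈ S \ A, x k :=
            Finset.sum_le_sum (fun k hk => (hSin k (Finset.mem_sdiff.mp hk).1).2)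
    have hSsplit : ∑ k ∈ S ∩ A, x k + ∑ k ∈ S \ A, x k = ∑ k ∈ S, x k :=
      Finset.sum_inter_add_sum_sdiff S A x
    have hSAcards : (S ∩ A).card + (S \ A).card = S.card :=
      Finset.card_inter_add_card_sdiff S A
    have hinterswap : A ∩ S = S ∩ A := Finset.inter_comm A S
    have hintereq : ∑ k ∈ A ∩ S, y k = ∑ k ∈ S ∩ A, x k := by
      rw [hinterswap]
      exact Finset.sum_congr rfl (fun k hk => (hSin k (Finset.mem_inter.mp hk).1).1)
    have hBsum : ∑ k ∈ B, x k = x i + ∑ k ∈ S, x k := by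
      rw [hS, ← Finset.sum_erase_add B x hiB]; ring
    -- cardinal bookkeeping
    have hcc : (S ∩ A).card = (A ∩ S).card := by rw [hinterswap]
    have hSAd : (S \ A).card + 1 = (A \ S).card := by omega
    -- conclude
    have : ∑ k ∈ A, y k < ∑ k ∈ B, x k := by
      have e1 : ((S \ A).card : ℤ) + 1 = ((A \ S).card : ℤ) := by exact_mod_cast hSAd
      have e2 : (1 : ℤ) ≤ ((A \ S).card : ℤ) := by exact_mod_cast hd1
      have key : ((A \ S).card : ℤ) * (x i - 1) =
          ((S \ A).card : ℤ) * x i + x i - ((A \ S).card : ℤ) := by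
        rw [← e1]; ring
      linarith [hdiffle, hmissed, hsplit, hSsplit, hintereq, hBsum]
    omega
  
/-- In an S-convex set, a vector is central (strictly majorizes no member)
iff its coordinates pairwise differ by at most 1. -/
theorem stmt12 {n : ℕ} (X : Set (Fin n → ℤ))
    (hXpos : ∀ x ∈ X, ∀ i, 0 ≤ x i) (hX : SConvex X)
    (x : Fin n → ℤ) (hx : x ∈ X) :
    (¬ ∃ y ∈ X, smajZ x y) ↔ ∀ i j : Fin n, |x i - x j| ≤ 1 := by
  constructor
  · -- central → balanced (contrapositive via gap_not_central)
    intro hcen i j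
    by_contra hij
    push_neg at hij
    rcases le_or_gt (x i) (x j) with h | h
    · have : 2 ≤ x j - x i := by rw [abs_sub_comm] at hij; rw [abs_of_nonneg (by omega)] at hij; omega
      exact hcen (gap_not_central X hX x hx j i this)
    · have : 2 ≤ x i - x j := by rw [abs_of_pos (by omega)] at hij; omega
      exact hcen (gap_not_central X hX x hx i j this)
  · -- balanced → central
    intro hdiff
    rintro ⟨y, hyX, hmaj, hnot⟩
    apply hnot
    refine ⟨?_, hmaj.2.symm⟩
    intro B
    rcases Nat.eq_zero_or_pos B.card with hk | hk
    · refine ⟨∅, by simp [hk], ?_⟩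
      rw [Finset.card_eq_zero.mp hk]
      simp
    -- n ≥ 1, set a = min coordinate of x
    have hn : 0 < n := by
      rcases Finset.card_pos.mp hk with ⟨b, _⟩
      exact Fin.pos b
    have hne : (Finset.univ : Finset (Fin n)).Nonempty := ⟨⟨0, hn⟩, Finset.mem_univ _⟩
    obtain ⟨q0, _, hq0⟩ := Finset.exists_min_image Finset.univ x hne
    set a := x q0 with ha
    have ha1 : ∀ p, a ≤ x p := fun p => hq0 p (Finset.mem_univ p)
    have ha2 : ∀ p, x p ≤ a + 1 := by
      intro p
      have := hdiff p q0
      rw [abs_le] at this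
      omega
    -- pick sum-maximal A of the right cardinality
    obtain ⟨A, hAmem, hAmax⟩ := Finset.exists_max_image
      ((Finset.univ : Finset (Fin n)).powersetCard B.card) (fun A => ∑ k ∈ A, y k)
      ⟨B, Finset.mem_powersetCard_univ.mpr rfl⟩
    have hAcard : A.card = B.card := Finset.mem_powersetCard_univ.mp hAmem
    refine ⟨A, hAcard, ?_⟩
    by_cases hT : (B.card : ℤ) * (a + 1) ≤ ∑ k ∈ A, y k
    · calc ∑ k ∈ B, x k ≤ ∑ _k ∈ B, (a + 1) := Finset.sum_le_sum (fun k _ => ha2 k)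
        _ = (B.card : ℤ) * (a + 1) := by rw [Finset.sum_const]; ring
        _ ≤ ∑ k ∈ A, y k := hT
    · push_neg at hT
      have hAne : A.Nonempty := Finset.card_pos.mp (hAcard ▸ hk)
      obtain ⟨q, hqA, hqmin⟩ := Finset.exists_min_image A y hAne
      have hqa : y q ≤ a := by
        have h1 : (A.card : ℤ) * y q ≤ ∑ k ∈ A, y k := by
          calc (A.card : ℤ) * y q = ∑ _k ∈ A, y q := by rw [Finset.sum_const]; ring
            _ ≤ ∑ k ∈ A, y k := Finset.sum_le_sum (fun k hkA => hqmin k hkA)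
        rw [hAcard] at h1
        have hkpos : (0 : ℤ) < (B.card : ℤ) := by exact_mod_cast hk
        nlinarith
      have hout : ∀ p, p ∉ A → y p ≤ a := by
        intro p hp
        by_contra hc
        push_neg at hc
        obtain ⟨hcard', hsum'⟩ := swap_sum y hqA hp
        have hmem' : insert p (A.erase q) ∈ (Finset.univ : Finset (Fin n)).powersetCard B.card :=
          Finset.mem_powersetCard_univ.mpr (by rw [hcard', hAcard])
        have := hAmax _ hmem'
        simp only [hsum'] at this
        omega
      -- total sums
      have hAcompl : ∑ k ∈ A, y k + ∑ k ∈ Aᶜ, y k = ∑ k, y k :=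
        Finset.sum_add_sum_compl A y
      have hBcompl : ∑ k ∈ B, x k + ∑ k ∈ Bᶜ, x k = ∑ k, x k :=
        Finset.sum_add_sum_compl B x
      have hcompl_card : (Aᶜ : Finset (Fin n)).card = (Bᶜ : Finset (Fin n)).card := by
        rw [Finset.card_compl, Finset.card_compl, hAcard]
      have hAcUB : ∑ k ∈ Aᶜ, y k ≤ ((Aᶜ : Finset (Fin n)).card : ℤ) * a := by
        calc ∑ k ∈ Aᶜ, y k ≤ ∑ _k ∈ Aᶜ, a :=
              Finset.sum_le_sum (fun k hkc => hout k (Finset.mem_compl.mp hkc))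
          _ = ((Aᶜ : Finset (Fin n)).card : ℤ) * a := by rw [Finset.sum_const]; ring
      have hBcLB : ((Bᶜ : Finset (Fin n)).card : ℤ) * a ≤ ∑ k ∈ Bᶜ, x k := by
        calc ((Bᶜ : Finset (Fin n)).card : ℤ) * a = ∑ _k ∈ Bᶜ, a := by
              rw [Finset.sum_const]; ring
          _ ≤ ∑ k ∈ Bᶜ, x k := Finset.sum_le_sum (fun k _ => ha1 k)
      have htot : ∑ k, x k = ∑ k, y k := hmaj.2
      rw [hcompl_card] at hAcUB
      omega
end

section
/- If f: Z_+^n → R_+ is Schur-concave and X ⊆ Z_+^n is a finite nonempty S-convex set, then f attains its maximum over X at some central distribution of X, and f attains its minimum over X at some extremal distribution of X. -/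
open Finset

lemma majZ_refl {n : ℕ} (x : Fin n → ℤ) : majZ x x :=
  ⟨fun B => ⟨B, rfl, le_rfl⟩, rfl⟩

lemma majZ_trans {n : ℕ} {x y z : Fin n → ℤ} (h1 : majZ x y) (h2 : majZ y z) :
    majZ x z := by
  refine ⟨fun B => ?_, h1.2.trans h2.2⟩
  obtain ⟨A, hA, hle⟩ := h2.1 B
  obtain ⟨A', hA', hle'⟩ := h1.1 A
  exact ⟨A', hA'.trans hA, hle.trans hle'⟩

lemma smajZ_irrefl {n : ℕ} (x : Fin n → ℤ) : ¬ smajZ x x :=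
  fun h => h.2 (majZ_refl x)

lemma smajZ_trans {n : ℕ} {x y z : Fin n → ℤ} (h1 : smajZ x y) (h2 : smajZ y z) :
    smajZ x z :=
  ⟨majZ_trans h1.1 h2.1, fun h => h1.2 (majZ_trans h2.1 h)⟩

/-- Any finite nonempty set has an element minimal for a transitive
irreflexive relation. -/
lemma exists_rel_minimal {α : Type*} (r : α → α → Prop)
    (htr : ∀ a b c, r a b → r b c → r a c) (hirr : ∀ a, ¬ r a a) :
    ∀ s : Finset α, s.Nonempty → ∃ x ∈ s, ∀ y ∈ s, ¬ r x y := by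
  classical
  intro s
  induction s using Finset.strongInduction with
  | _ s ih =>
    intro hs
    obtain ⟨a, ha⟩ := hs
    by_cases h : ∀ y ∈ s, ¬ r a y
    · exact ⟨a, ha, h⟩
    · push_neg at h
      obtain ⟨b, hb, hab⟩ := h
      have hsub : s.filter (fun y => r a y) ⊂ s :=
        Finset.filter_ssubset.mpr ⟨a, ha, hirr a⟩
      obtain ⟨x, hx, hmin⟩ := ih _ hsub ⟨b, Finset.mem_filter.mpr ⟨hb, hab⟩⟩
      have hax := (Finset.mem_filter.mp hx).2
      refine ⟨x, (Finset.mem_filter.mp hx).1, fun y hy hxy => ?_⟩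
      exact hmin y (Finset.mem_filter.mpr ⟨hy, htr a x y hax hxy⟩) hxy

/-- A Schur-concave index on a finite nonempty S-convex set attains its maximum
at a central distribution and its minimum at an extremal distribution. -/
theorem stmt14 {n : ℕ} (f : (Fin n → ℤ) → ℝ)
    (hf0 : ∀ x : Fin n → ℤ, (∀ i, 0 ≤ x i) → 0 ≤ f x)
    (hSchur : ∀ x y : Fin n → ℤ, (∀ i, 0 ≤ x i) → (∀ i, 0 ≤ y i) →
        majZ x y → f x ≤ f y)
    (X : Set (Fin n → ℤ)) (hXpos : ∀ x ∈ X, ∀ i, 0 ≤ x i)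
    (hX : SConvex X) (hfin : X.Finite) (hne : X.Nonempty) :
    (∃ x ∈ X, (¬ ∃ y ∈ X, smajZ x y) ∧ ∀ y ∈ X, f y ≤ f x) ∧
    (∃ x ∈ X, (¬ ∃ y ∈ X, smajZ y x) ∧ ∀ y ∈ X, f x ≤ f y) := by
  classical
  set F : Finset (Fin n → ℤ) := hfin.toFinset with hF
  have hmemF : ∀ x, x ∈ F ↔ x ∈ X := fun x => hfin.mem_toFinset
  have hFne : F.Nonempty := by
    obtain ⟨a, ha⟩ := hne
    exact ⟨a, (hmemF a).mpr ha⟩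
  constructor
  · -- maximum at a central distribution
    obtain ⟨b, hbF, hbmax⟩ := F.exists_max_image f hFne
    set M : Finset (Fin n → ℤ) := F.filter (fun x => f b ≤ f x) with hM
    have hbM : b ∈ M := Finset.mem_filter.mpr ⟨hbF, le_rfl⟩
    obtain ⟨x, hxM, hxmin⟩ :=
      exists_rel_minimal (fun a b => smajZ a b)
        (fun a b c => smajZ_trans) smajZ_irrefl M ⟨b, hbM⟩
    have hxF := (Finset.mem_filter.mp hxM).1
    have hxb : f b ≤ f x := (Finset.mem_filter.mp hxM).2
    have hxX : x ∈ X := (hmemF x).mp hxF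
    refine ⟨x, hxX, ?_, fun y hy => le_trans (hbmax y ((hmemF y).mpr hy)) hxb⟩
    rintro ⟨y, hyX, hsm⟩
    have hfy : f x ≤ f y :=
      hSchur x y (hXpos x hxX) (hXpos y hyX) hsm.1
    have hyM : y ∈ M :=
      Finset.mem_filter.mpr ⟨(hmemF y).mpr hyX, le_trans hxb hfy⟩
    exact hxmin y hyM hsm
  · -- minimum at an extremal distribution
    obtain ⟨b, hbF, hbmin⟩ := F.exists_min_image f hFne
    set M : Finset (Fin n → ℤ) := F.filter (fun x => f x ≤ f b) with hM
    have hbM : b ∈ M := Finset.mem_filter.mpr ⟨hbF, le_rfl⟩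
    obtain ⟨x, hxM, hxmin⟩ :=
      exists_rel_minimal (fun a b => smajZ b a)
        (fun a b c h1 h2 => smajZ_trans h2 h1) smajZ_irrefl M ⟨b, hbM⟩
    have hxF := (Finset.mem_filter.mp hxM).1
    have hxb : f x ≤ f b := (Finset.mem_filter.mp hxM).2
    have hxX : x ∈ X := (hmemF x).mp hxF
    refine ⟨x, hxX, ?_, fun y hy => le_trans hxb (hbmin y ((hmemF y).mpr hy))⟩
    rintro ⟨y, hyX, hsm⟩
    have hfy : f y ≤ f x :=
      hSchur y x (hXpos y hyX) (hXpos x hxX) hsm.1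
    have hyM : y ∈ M :=
      Finset.mem_filter.mpr ⟨(hmemF y).mpr hyX, le_trans hfy hxb⟩
    exact hxmin y hyM hsm
end

section
/- Let C be the b-targeting Schur choice rule for a strict priority ranking P on a finite student set, and let C' be any choice rule with |C'(S)| ≤ q. If C(S) ≠ C'(S) for some S, then either |C(S)| > |C'(S)|, or T_b(ξ(C'(S))) strictly majorizes T_b(ξ(C(S))), or C(S) P-priority dominates C'(S). -/
open Finset

/-- `x` majorizes `y`: for each `k`, the sum of the `k` largest coordinates of `x`
is at least that of `y`, and the total sums agree.  (Stated via the equivalent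
subset formulation.) -/
def maj {n : ℕ} (x y : Fin n → ℝ) : Prop :=
  (∀ B : Finset (Fin n), ∃ A : Finset (Fin n),
      A.card = B.card ∧ ∑ i ∈ B, y i ≤ ∑ i ∈ A, x i) ∧
  ∑ i, x i = ∑ i, y i

/-- strict majorization -/
def smaj {n : ℕ} (x y : Fin n → ℝ) : Prop := maj x y ∧ ¬ maj y x

/-- The biased transformation `T_b(x) = x + (Σ_i x_i)·b`. -/
noncomputable def Tb {n : ℕ} (b : Fin n → ℝ) (x : Fin n → ℤ) : Fin n → ℝ :=
  fun i => (x i : ℝ) + (∑ j, (x j : ℝ)) * b i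

/-- The budget set `B(x)` for capacity `q`. -/
def memB {n : ℕ} (q : ℕ) (x y : Fin n → ℤ) : Prop :=
  (∀ i, 0 ≤ y i) ∧ (∀ i, y i ≤ x i) ∧ ∑ i, y i ≤ (q : ℤ)

/-- The `b`-targeting Schur frontier `F_b(x)`. -/
def memF {n : ℕ} (q : ℕ) (b : Fin n → ℝ) (x y : Fin n → ℤ) : Prop :=
  memB q x y ∧
    ¬ ∃ z : Fin n → ℤ, memB q x z ∧ ((y ≤ z ∧ y ≠ z) ∨ smaj (Tb b y) (Tb b z))


/-- The type-count vector of a finite set of typed students. -/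
def xi {σ : Type} [DecidableEq σ] {n : ℕ} (typ : σ → Fin n) (R : Finset σ) :
    Fin n → ℤ :=
  fun i => ((R.filter fun s => typ s = i).card : ℤ)


open scoped Classical in
/-- The `b`-targeting Schur (greedy) choice rule: process the listed students in
order, admitting a student whenever the resulting type counts stay below some
frontier distribution of `ξ(S)`. -/
noncomputable def schurChoice {σ : Type} [DecidableEq σ] {n : ℕ}
    (q : ℕ) (b : Fin n → ℝ) (typ : σ → Fin n) (S : Finset σ) :
    List σ → Finset σ → Finset σ
  | [], acc => acc
  | s :: rest, acc =>
      if ∃ x : Fin n → ℤ, memF q b (xi typ S) x ∧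
          ∀ i, xi typ (insert s acc) i ≤ x i then
        schurChoice q b typ S rest (insert s acc)
      else schurChoice q b typ S rest acc

/-- `A` P-priority dominates `A'` (lower `prio` value = higher priority):
`A` is at least as large, and coordinatewise its sorted priority values
are at least as high (i.e. numerically at most) those of `A'`. -/
def pdom {σ : Type} [DecidableEq σ] (prio : σ → ℕ) (A A' : Finset σ) : Prop :=
  A'.card ≤ A.card ∧ ∀ k, k < A'.card →
    (Finset.sort (A.image prio) (· ≤ ·)).getD k 0 ≤
      (Finset.sort (A'.image prio) (· ≤ ·)).getD k 0

/-! Every frontier vector of `F_b(ξ S)` has the maximal size `min(q, |S|)` and admits no unit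
transfer between types that would make `T_b` more balanced; conversely such a "stable" vector is
majorized (after `T_b`) by every feasible vector of maximal size, by moving the latter towards it
one unit at a time. The greedy rule only rejects a student when no frontier vector has room for
him, so `ξ(C S)` is itself a frontier vector. Hence `|C' S| ≤ |C S|`, and when the sizes agree
`T_b(ξ(C' S))` majorizes `T_b(ξ(C S))`: either strictly, or `ξ(C' S)` is a frontier vector too.
In the last case an exchange property of the frontier (if `u ≤ x` and `v ≤ y` for frontier
vectors `x, y` and `|u| < |v|`, then `u` can be raised by one unit at a type where `v` exceeds
it and still lie below a frontier vector) shows that every priority prefix of `C' S` is no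
larger than the corresponding prefix of `C S`, which is priority domination. -/

lemma Finset.sum_add_single_sub_single {ι M : Type*} [DecidableEq ι] [AddCommGroup M]
    (s : Finset ι) (w : ι → M) (i j : ι) (a : M) :
    ∑ l ∈ s, (w + Pi.single i a - Pi.single j a : ι → M) l =
      ∑ l ∈ s, w l + (if i ∈ s then a else 0) - (if j ∈ s then a else 0) := by
  simp only [Pi.sub_apply, Pi.add_apply, sum_sub_distrib, sum_add_distrib, sum_pi_single']

lemma Fintype.sum_add_single_sub_single {ι M : Type*} [Fintype ι] [DecidableEq ι]
    [AddCommGroup M] (w : ι → M) (i j : ι) (a : M) :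
    ∑ l, (w + Pi.single i a - Pi.single j a : ι → M) l = ∑ l, w l := by
  rw [Finset.sum_add_single_sub_single]
  simp

section Majorization
variable {n : ℕ}

lemma maj_refl (x : Fin n → ℝ) : maj x x :=
  ⟨fun B => ⟨B, rfl, le_rfl⟩, rfl⟩

lemma maj.trans {x y z : Fin n → ℝ} (hxy : maj x y) (hyz : maj y z) : maj x z := by
  refine ⟨fun B => ?_, hxy.2.trans hyz.2⟩
  obtain ⟨A, hA, hBA⟩ := hyz.1 B
  obtain ⟨A', hA', hAA'⟩ := hxy.1 A
  exact ⟨A', hA'.trans hA, hBA.trans hAA'⟩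

lemma maj.sum_max_sub_le {x y : Fin n → ℝ} (h : maj x y) (c : ℝ) :
    ∑ l, max (y l - c) 0 ≤ ∑ l, max (x l - c) 0 := by
  obtain ⟨A, hA, hle⟩ := h.1 (univ.filter (c < y ·))
  calc ∑ l, max (y l - c) 0 = ∑ l ∈ univ.filter (c < y ·), (y l - c) := by
        rw [sum_filter]
        refine sum_congr rfl fun l _ => ?_
        split_ifs with hl
        · exact max_eq_left (sub_nonneg.2 hl.le)
        · exact max_eq_right (sub_nonpos.2 (not_lt.1 hl))
    _ ≤ ∑ l ∈ A, (x l - c) := by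
        simp only [sum_sub_distrib, sum_const, hA]
        linarith
    _ ≤ ∑ l ∈ A, max (x l - c) 0 := sum_le_sum fun l _ => le_max_left _ _
    _ ≤ ∑ l, max (x l - c) 0 :=
        sum_le_sum_of_subset_of_nonneg (subset_univ A) fun l _ _ => le_max_right _ _

lemma maj_add_single_sub_single {w : Fin n → ℝ} {i j : Fin n} (h : w i + 1 ≤ w j) :
    maj w (w + Pi.single i 1 - Pi.single j 1) := by
  refine ⟨fun B => ?_, by rw [sum_add_single_sub_single]; simp⟩
  by_cases hB : i ∈ B ∧ j ∉ B
  · obtain ⟨hiB, hjB⟩ := hB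
    have hjB' : j ∉ B.erase i := fun hj => hjB (mem_of_mem_erase hj)
    refine ⟨insert j (B.erase i),
      by rw [card_insert_of_notMem hjB', card_erase_add_one hiB], ?_⟩
    rw [sum_add_single_sub_single, sum_insert hjB', sum_erase_eq_sub hiB, if_pos hiB,
      if_neg hjB]
    linarith
  · refine ⟨B, rfl, ?_⟩
    rw [sum_add_single_sub_single]
    split_ifs <;> simp_all

lemma not_maj_add_single_sub_single {w : Fin n → ℝ} {i j : Fin n} (h : w i + 1 < w j) :
    ¬ maj (w + Pi.single i 1 - Pi.single j 1) w := by
  have hij : i ≠ j := by rintro rfl; linarith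
  intro hmaj
  refine (hmaj.sum_max_sub_le (w i + 1)).not_gt (sum_lt_sum (fun l _ => ?_) ⟨j, mem_univ j, ?_⟩)
  · rcases eq_or_ne l i with rfl | hli
    · simp [hij]
    rcases eq_or_ne l j with rfl | hlj
    · simp [hli, h.le]
    · simp [hli, hlj]
  · simpa [hij.symm] using h

lemma smaj_add_single_sub_single {w : Fin n → ℝ} {i j : Fin n} (h : w i + 1 < w j) :
    smaj w (w + Pi.single i 1 - Pi.single j 1) :=
  ⟨maj_add_single_sub_single h.le, not_maj_add_single_sub_single h⟩

end Majorization

section Frontier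
variable {n : ℕ} {q : ℕ} {b : Fin n → ℝ} {cap : Fin n → ℤ}

def maxSize (q : ℕ) (cap : Fin n → ℤ) : ℤ := min (q : ℤ) (∑ i, cap i)

lemma memB.sum_le_maxSize {y : Fin n → ℤ} (hy : memB q cap y) : ∑ i, y i ≤ maxSize q cap :=
  le_min hy.2.2 (sum_le_sum fun i _ => hy.2.1 i)

lemma memB.exists_add_single {y : Fin n → ℤ} (hy : memB q cap y)
    (hlt : ∑ i, y i < maxSize q cap) : ∃ i, memB q cap (y + Pi.single i 1) := by
  obtain ⟨i, hi⟩ : ∃ i, y i < cap i := by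
    by_contra! h
    exact (hlt.trans_le (min_le_right _ _)).not_ge (sum_le_sum fun i _ => h i)
  refine ⟨i, fun l => ?_, fun l => ?_, ?_⟩
  · have := hy.1 l
    simp only [Pi.add_apply, Pi.single_apply]
    split_ifs <;> subst_vars <;> omega
  · have := hy.2.1 l
    simp only [Pi.add_apply, Pi.single_apply]
    split_ifs <;> subst_vars <;> omega
  · have := hlt.trans_le (min_le_left _ _)
    simp only [Pi.add_apply, sum_add_distrib, Fintype.sum_pi_single']
    omega

lemma memB.add_single_sub_single {y : Fin n → ℤ} (hy : memB q cap y) {i j : Fin n}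
    (hi : y i < cap i) (hj : 0 < y j) : memB q cap (y + Pi.single i 1 - Pi.single j 1) := by
  refine ⟨fun l => ?_, fun l => ?_, ?_⟩
  · have := hy.1 l
    simp only [Pi.add_apply, Pi.sub_apply, Pi.single_apply]
    split_ifs <;> subst_vars <;> omega
  · have := hy.2.1 l
    simp only [Pi.add_apply, Pi.sub_apply, Pi.single_apply]
    split_ifs <;> subst_vars <;> omega
  · rw [Fintype.sum_add_single_sub_single]
    exact hy.2.2

lemma Tb_add_single_sub_single (b : Fin n → ℝ) (u : Fin n → ℤ) (i j : Fin n) :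
    Tb b (u + Pi.single i 1 - Pi.single j 1) = Tb b u + Pi.single i 1 - Pi.single j 1 := by
  have hsum : ∑ l, ((u + Pi.single i 1 - Pi.single j 1 : Fin n → ℤ) l : ℝ) =
      ∑ l, (u l : ℝ) := by
    rw [← Int.cast_sum, ← Int.cast_sum, Fintype.sum_add_single_sub_single]
  ext l
  rw [Tb, hsum]
  simp only [Tb, Pi.add_apply, Pi.sub_apply, Int.cast_add, Int.cast_sub, Pi.single_apply]
  split_ifs <;> push_cast <;> ring

lemma Tb_sub_Tb {y u : Fin n → ℤ} (h : ∑ l, y l = ∑ l, u l) (i : Fin n) :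
    Tb b y i - Tb b u i = y i - u i := by
  have : ∑ l, (y l : ℝ) = ∑ l, (u l : ℝ) := by exact_mod_cast h
  simp only [Tb, this]
  ring

lemma sum_Tb (hb : ∑ i, b i = 0) (u : Fin n → ℤ) : ∑ i, Tb b u i = ∑ i, (u i : ℝ) := by
  simp only [Tb, sum_add_distrib, ← mul_sum, hb, mul_zero, add_zero]

lemma memF.sum_eq {u : Fin n → ℤ} (hu : memF q b cap u) : ∑ i, u i = maxSize q cap := by
  refine hu.1.sum_le_maxSize.antisymm (not_lt.1 fun hlt => ?_)
  obtain ⟨i, hi⟩ := hu.1.exists_add_single hlt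
  refine hu.2 ⟨_, hi, Or.inl ⟨le_add_of_nonneg_right fun l => ?_, fun h => ?_⟩⟩
  · rcases eq_or_ne l i with rfl | hl <;> simp [*]
  · simpa using congrFun h i

def Stable (q : ℕ) (b : Fin n → ℝ) (cap u : Fin n → ℤ) : Prop :=
  memB q cap u ∧ ∑ i, u i = maxSize q cap ∧
    ∀ i j, u i < cap i → 0 < u j → Tb b u j ≤ Tb b u i + 1

lemma memF.stable {u : Fin n → ℤ} (hu : memF q b cap u) : Stable q b cap u := by
  refine ⟨hu.1, hu.sum_eq, fun i j hi hj => not_lt.1 fun hlt =>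
    hu.2 ⟨_, hu.1.add_single_sub_single hi hj, Or.inr ?_⟩⟩
  rw [Tb_add_single_sub_single]
  exact smaj_add_single_sub_single hlt

def intDist (u v : Fin n → ℤ) : ℕ := ∑ l, (u l - v l).natAbs

lemma intDist_add_single_sub_single_lt {y u : Fin n → ℤ} {i j : Fin n} (hi : y i < u i)
    (hj : u j < y j) : intDist (y + Pi.single i 1 - Pi.single j 1) u < intDist y u := by
  refine sum_lt_sum (fun l _ => ?_) ⟨i, mem_univ i, ?_⟩ <;>
    simp only [Pi.add_apply, Pi.sub_apply, Pi.single_apply] <;> split_ifs <;> subst_vars <;> omega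

lemma Stable.maj_Tb {u : Fin n → ℤ} (hu : Stable q b cap u) {y : Fin n → ℤ}
    (hy : memB q cap y) (hsum : ∑ i, y i = maxSize q cap) : maj (Tb b y) (Tb b u) := by
  induction hd : intDist y u using Nat.strong_induction_on generalizing y with
  | _ d ih =>
  by_cases hyu : y = u
  · subst hyu
    exact maj_refl _
  have hsum' : ∑ l, y l = ∑ l, u l := hsum.trans hu.2.1.symm
  obtain ⟨i, hi⟩ : ∃ i, u i < y i := by
    by_contra! h
    exact hsum'.not_lt (Fintype.sum_strictMono (lt_of_le_of_ne h hyu))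
  obtain ⟨j, hj⟩ : ∃ j, y j < u j := by
    by_contra! h
    exact hsum'.not_gt (Fintype.sum_strictMono (lt_of_le_of_ne h (Ne.symm hyu)))
  have hstab := hu.2.2 i j (hi.trans_le (hy.2.1 i)) ((hy.1 j).trans_lt hj)
  -- Moving a unit of `y` from `i` to `j` is a Robin Hood transfer for `T_b y`, by stability of `u`.
  have hmove : Tb b y j + 1 ≤ Tb b y i := by
    have hi' : (u i : ℝ) + 1 ≤ y i := by exact_mod_cast hi
    have hj' : (y j : ℝ) + 1 ≤ u j := by exact_mod_cast hj
    linarith [Tb_sub_Tb (b := b) hsum' i, Tb_sub_Tb (b := b) hsum' j]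
  have hmaj := maj_add_single_sub_single hmove
  rw [← Tb_add_single_sub_single] at hmaj
  exact hmaj.trans (ih _ (hd ▸ intDist_add_single_sub_single_lt hj hi)
    (hy.add_single_sub_single (hj.trans_le (hu.1.2.1 j)) ((hu.1.1 i).trans_lt hi))
    (by rw [Fintype.sum_add_single_sub_single, hsum]) rfl)

lemma memB.not_lt_of_sum_eq_maxSize {y w : Fin n → ℤ} (hw : memB q cap w)
    (hy : ∑ i, y i = maxSize q cap) : ¬ (y ≤ w ∧ y ≠ w) := fun ⟨hle, hne⟩ => by
  have : ∑ i, y i < ∑ i, w i := Fintype.sum_strictMono (lt_of_le_of_ne hle hne)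
  linarith [hw.sum_le_maxSize]

lemma memF.of_maj {z z' : Fin n → ℤ} (hz : memF q b cap z) (hz' : memB q cap z')
    (hsum : ∑ i, z' i = maxSize q cap) (hmaj : maj (Tb b z) (Tb b z')) :
    memF q b cap z' := by
  refine ⟨hz', ?_⟩
  rintro ⟨w, hw, hlt | hsmaj⟩
  · exact hw.not_lt_of_sum_eq_maxSize hsum hlt
  · exact hz.2 ⟨w, hw, Or.inr ⟨hmaj.trans hsmaj.1, fun h => hsmaj.2 (h.trans hmaj)⟩⟩

lemma sum_sq_add_single_sub_single_lt {w : Fin n → ℝ} {i j : Fin n} (h : w i + 1 < w j) :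
    ∑ l, (w + Pi.single i 1 - Pi.single j 1 : Fin n → ℝ) l ^ 2 < ∑ l, w l ^ 2 := by
  have hij : i ≠ j := by rintro rfl; linarith
  rw [← sub_neg, ← sum_sub_distrib, Fintype.sum_eq_add i j hij fun l hl => by simp [hl.1, hl.2]]
  simp [hij, hij.symm]
  nlinarith

noncomputable def budgetSet (q : ℕ) (cap : Fin n → ℤ) : Finset (Fin n → ℤ) :=
  (Icc 0 cap).filter fun y => ∑ i, y i ≤ q

lemma mem_budgetSet {y : Fin n → ℤ} : y ∈ budgetSet q cap ↔ memB q cap y := by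
  simp [budgetSet, memB, Pi.le_def, and_assoc]

lemma exists_memB_sum_eq_maxSize (hcap : 0 ≤ cap) :
    ∃ y, memB q cap y ∧ ∑ i, y i = maxSize q cap := by
  obtain ⟨y, hy, hmax⟩ := (budgetSet q cap).exists_max_image (fun y => ∑ i, y i)
    ⟨0, mem_budgetSet.2 ⟨fun _ => le_rfl, hcap, by simp⟩⟩
  rw [mem_budgetSet] at hy
  refine ⟨y, hy, hy.sum_le_maxSize.antisymm (not_lt.1 fun hlt => ?_)⟩
  obtain ⟨i, hi⟩ := hy.exists_add_single hlt
  have := hmax _ (mem_budgetSet.2 hi)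
  simp [sum_add_distrib] at this

lemma exists_stable (hcap : 0 ≤ cap) : ∃ u, Stable q b cap u := by
  obtain ⟨y, hy, hysum⟩ := exists_memB_sum_eq_maxSize (q := q) hcap
  obtain ⟨u, hu, hmin⟩ :=
    ((budgetSet q cap).filter fun y => ∑ i, y i = maxSize q cap).exists_min_image
    (fun y => ∑ l, Tb b y l ^ 2) ⟨y, mem_filter.2 ⟨mem_budgetSet.2 hy, hysum⟩⟩
  rw [mem_filter, mem_budgetSet] at hu
  refine ⟨u, hu.1, hu.2, fun i j hi hj => not_lt.1 fun hlt => ?_⟩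
  have := hmin _ (mem_filter.2 ⟨mem_budgetSet.2 (hu.1.add_single_sub_single hi hj),
    by rw [Fintype.sum_add_single_sub_single, hu.2]⟩)
  rw [Tb_add_single_sub_single] at this
  exact this.not_gt (sum_sq_add_single_sub_single_lt hlt)

lemma sum_eq_of_maj_Tb (hb : ∑ i, b i = 0) {u z : Fin n → ℤ} (h : maj (Tb b u) (Tb b z)) :
    ∑ i, u i = ∑ i, z i := by
  have := h.2
  rw [sum_Tb hb, sum_Tb hb] at this
  exact_mod_cast this

lemma Stable.memF (hb : ∑ i, b i = 0) {u : Fin n → ℤ} (hu : Stable q b cap u) :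
    memF q b cap u := by
  refine ⟨hu.1, ?_⟩
  rintro ⟨z, hz, hlt | hsmaj⟩
  · exact hz.not_lt_of_sum_eq_maxSize hu.2.1 hlt
  · exact hsmaj.2 (hu.maj_Tb hz ((sum_eq_of_maj_Tb hb hsmaj.1).symm.trans hu.2.1))

lemma exists_memF (hb : ∑ i, b i = 0) (hcap : 0 ≤ cap) : ∃ u, memF q b cap u :=
  (exists_stable hcap).imp fun _ hu => hu.memF hb

lemma memF.exists_add_single_le {x y u v : Fin n → ℤ} (hx : memF q b cap x)
    (hy : memF q b cap y) (hux : u ≤ x) (hvy : v ≤ y) (hsum : ∑ i, u i < ∑ i, v i) :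
    ∃ i, u i < v i ∧ ∃ z, memF q b cap z ∧ u + Pi.single i 1 ≤ z := by
  suffices ∀ z, memF q b cap z → u ≤ z →
      ∃ i, u i < v i ∧ ∃ z, memF q b cap z ∧ u + Pi.single i 1 ≤ z from this x hx hux
  intro z hz huz
  induction hd : intDist z y using Nat.strong_induction_on generalizing z with
  | _ d ih =>
  by_cases hdone : ∃ i, u i < v i ∧ u i < z i
  · obtain ⟨i, hiv, hiz⟩ := hdone
    refine ⟨i, hiv, z, hz, fun l => ?_⟩
    have : u l ≤ z l := huz l
    simp only [Pi.add_apply, Pi.single_apply]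
    split_ifs <;> subst_vars <;> omega
  push Not at hdone
  -- Otherwise shift a unit of `z` towards `y`, from a type `j` with `y j < z j` to a type `i`
  -- with `u i < v i`: stability of `y` bounds the `T_b`-gap, so `z` majorizes the shifted
  -- vector, which is therefore on the frontier too.
  have hzy : ∑ l, z l = ∑ l, y l := hz.sum_eq.trans hy.sum_eq.symm
  obtain ⟨i, hi⟩ : ∃ i, u i < v i := by
    by_contra! h
    exact hsum.not_ge (sum_le_sum fun i _ => h i)
  obtain ⟨j, hjy, hju⟩ : ∃ j, y j < z j ∧ u j < z j := by
    by_contra! h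
    have : ∑ l, (v l - u l) ≤ ∑ l, (y l - z l) := sum_le_sum fun l _ => by
      have := hdone l; have := h l; have : u l ≤ z l := huz l; have : v l ≤ y l := hvy l
      omega
    simp only [sum_sub_distrib] at this
    omega
  have hiy : z i < y i := by
    have := hdone i hi; have : u i ≤ z i := huz i; have : v i ≤ y i := hvy i
    omega
  have hstab := hy.stable.2.2 j i (hjy.trans_le (hz.1.2.1 j)) ((hz.1.1 i).trans_lt hiy)
  have hmove : Tb b z i + 1 ≤ Tb b z j := by
    have hi' : (z i : ℝ) + 1 ≤ y i := by exact_mod_cast hiy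
    have hj' : (y j : ℝ) + 1 ≤ z j := by exact_mod_cast hjy
    linarith [Tb_sub_Tb (b := b) hzy i, Tb_sub_Tb (b := b) hzy j]
  have hmaj := maj_add_single_sub_single hmove
  rw [← Tb_add_single_sub_single] at hmaj
  have hz' := hz.of_maj (hz.1.add_single_sub_single (hiy.trans_le (hy.1.2.1 i))
    ((hy.1.1 j).trans_lt hjy)) (by rw [Fintype.sum_add_single_sub_single, hz.sum_eq]) hmaj
  refine ih _ (hd ▸ intDist_add_single_sub_single_lt hiy hjy) _ hz' (fun l => ?_) rfl
  have : u l ≤ z l := huz l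
  simp only [Pi.add_apply, Pi.sub_apply, Pi.single_apply]
  split_ifs <;> subst_vars <;> omega

end Frontier

section TypeCount
variable {σ : Type} [DecidableEq σ] {n : ℕ} (typ : σ → Fin n)

lemma xi_mono {R R' : Finset σ} (h : R ⊆ R') : xi typ R ≤ xi typ R' := fun _ => by
  unfold xi
  exact Nat.cast_le.2 (card_le_card (filter_subset_filter _ h))

lemma sum_xi (R : Finset σ) : ∑ i, xi typ R i = #R := by
  unfold xi
  rw [← Nat.cast_sum, card_eq_sum_card_fiberwise fun s _ => mem_univ (typ s)]

lemma xi_insert_le (s : σ) (R : Finset σ) :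
    xi typ (insert s R) ≤ xi typ R + Pi.single (typ s) 1 := fun i => by
  unfold xi
  by_cases h : typ s = i
  · subst h
    simp only [filter_insert, if_pos, Pi.add_apply, Pi.single_eq_same]
    exact_mod_cast card_insert_le _ _
  · simp [filter_insert, h, Ne.symm h]

lemma exists_mem_of_xi_lt {U V : Finset σ} {i : Fin n} (h : xi typ U i < xi typ V i) :
    ∃ s ∈ V, s ∉ U ∧ typ s = i := by
  obtain ⟨s, hsV, hsU⟩ := exists_mem_notMem_of_card_lt_card (s := U.filter (typ · = i))
    (t := V.filter (typ · = i)) (by unfold xi at h; exact_mod_cast h)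
  rw [mem_filter] at hsV hsU
  exact ⟨s, hsV.1, fun hs => hsU ⟨hs, hsV.2⟩, hsV.2⟩

lemma xi_memB {q : ℕ} {R S : Finset σ} (hRS : R ⊆ S) (hR : #R ≤ q) :
    memB q (xi typ S) (xi typ R) :=
  ⟨fun _ => Nat.cast_nonneg _, xi_mono typ hRS, by rw [sum_xi]; exact_mod_cast hR⟩

end TypeCount

section Greedy
variable {σ : Type} [DecidableEq σ] {n : ℕ} (q : ℕ) (b : Fin n → ℝ) (typ : σ → Fin n)
  (S : Finset σ)

def Admissible (R : Finset σ) : Prop := ∃ x, memF q b (xi typ S) x ∧ xi typ R ≤ x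

variable {q b typ S}

lemma Admissible.mono {R R' : Finset σ} (h : R' ⊆ R) (hR : Admissible q b typ S R) :
    Admissible q b typ S R' :=
  hR.imp fun _ hx => ⟨hx.1, (xi_mono typ h).trans hx.2⟩

lemma subset_schurChoice (l : List σ) (acc : Finset σ) : acc ⊆ schurChoice q b typ S l acc := by
  induction l generalizing acc with
  | nil => exact subset_rfl
  | cons s l ih =>
    rw [schurChoice]
    split_ifs
    · exact (subset_insert s acc).trans (ih _)
    · exact ih acc

lemma admissible_schurChoice {acc : Finset σ} (h : Admissible q b typ S acc) (l : List σ) :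
    Admissible q b typ S (schurChoice q b typ S l acc) := by
  induction l generalizing acc with
  | nil => exact h
  | cons s l ih =>
    rw [schurChoice]
    split_ifs with hs
    · exact ih hs
    · exact ih h

lemma mem_schurChoice_of_admissible {prio : σ → ℕ} {l : List σ}
    (hsort : l.Pairwise (prio · < prio ·)) {acc : Finset σ} {s : σ} (hs : s ∈ l)
    (h : Admissible q b typ S
      (insert s (acc ∪ (schurChoice q b typ S l acc).filter (prio · < prio s)))) :
    s ∈ schurChoice q b typ S l acc := by
  induction l generalizing acc with
  | nil => simp at hs
  | cons t l ih =>
    rw [List.pairwise_cons] at hsort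
    rw [schurChoice] at h ⊢
    split_ifs at h ⊢ with ht
    · rcases List.mem_cons.1 hs with rfl | hsl
      · exact subset_schurChoice l _ (mem_insert_self s acc)
      refine ih hsort.2 hsl (h.mono (insert_subset_insert _ fun c hc => ?_))
      simp only [mem_union, mem_insert, mem_filter] at hc ⊢
      rcases hc with (rfl | hc) | hc
      · exact Or.inr ⟨subset_schurChoice l _ (mem_insert_self c acc), hsort.1 s hsl⟩
      · exact Or.inl hc
      · exact Or.inr hc
    · rcases List.mem_cons.1 hs with rfl | hsl
      · exact absurd (h.mono (insert_subset_insert _ subset_union_left)) ht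
      exact ih hsort.2 hsl h

end Greedy

lemma Finset.sort_getD_eq_nth (D : Finset ℕ) (k : ℕ) :
    (D.sort (· ≤ ·)).getD k 0 = Nat.nth (· ∈ D) k := by
  rw [Nat.nth_eq_getD_sort (p := (· ∈ D)) D.finite_toSet]
  congr
  ext; simp

lemma Nat.count_mem_image {σ : Type} {f : σ → ℕ} (hf : Function.Injective f) (A : Finset σ)
    (N : ℕ) : Nat.count (· ∈ A.image f) N = #(A.filter (f · < N)) := by
  rw [Nat.count_eq_card_filter_range, ← Finset.card_image_of_injective _ hf]
  congr 1
  ext v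
  simp only [mem_filter, mem_range, mem_image]
  grind

lemma Nat.count_mem_nth_succ {D : Finset ℕ} {k : ℕ} (hk : k < #D) :
    Nat.count (· ∈ D) (Nat.nth (· ∈ D) k + 1) = k + 1 :=
  Nat.count_nth_succ fun hf => by
    convert hk
    ext; simp

lemma pdom_of_card_filter_le {σ : Type} [DecidableEq σ] {prio : σ → ℕ}
    (hinj : Function.Injective prio) {A A' : Finset σ}
    (h : ∀ p, #(A'.filter (prio · < p)) ≤ #(A.filter (prio · < p))) :
    pdom prio A A' := by
  refine ⟨?_, fun k hk => ?_⟩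
  · calc #A' = #(A'.filter (prio · < A'.sup prio + 1)) := by
          rw [filter_true_of_mem fun c hc => Nat.lt_succ_of_le (le_sup hc)]
      _ ≤ #(A.filter (prio · < A'.sup prio + 1)) := h _
      _ ≤ #A := card_filter_le _ _
  rw [Finset.sort_getD_eq_nth, Finset.sort_getD_eq_nth, ← Nat.lt_succ_iff]
  apply Nat.nth_lt_of_lt_count
  set p := Nat.nth (· ∈ A'.image prio) k + 1
  calc k < Nat.count (· ∈ A'.image prio) p := by
        rw [Nat.count_mem_nth_succ (by rwa [card_image_of_injective _ hinj])]
        exact k.lt_succ_self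
    _ ≤ Nat.count (· ∈ A.image prio) p := by
        simpa only [Nat.count_mem_image hinj] using h p

section SchurChoice
variable {σ : Type} [DecidableEq σ] {n : ℕ} {q : ℕ} {b : Fin n → ℝ} {typ : σ → Fin n}
  {S : Finset σ} {prio : σ → ℕ} {l : List σ}

lemma mem_schurChoice_of_le (hsort : l.Pairwise (prio · < prio ·)) {s : σ} (hs : s ∈ l)
    {R : Finset σ} (hR : (schurChoice q b typ S l ∅).filter (prio · < prio s) ⊆ R)
    {z : Fin n → ℤ} (hz : memF q b (xi typ S) z) (hRz : xi typ R + Pi.single (typ s) 1 ≤ z) :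
    s ∈ schurChoice q b typ S l ∅ :=
  mem_schurChoice_of_admissible hsort hs ⟨z, hz, (xi_mono typ (insert_subset_insert s
    (by simpa using hR))).trans ((xi_insert_le typ s R).trans hRz)⟩

lemma memF_xi_schurChoice (hb : ∑ i, b i = 0) (hl : ∀ s, s ∈ l ↔ s ∈ S)
    (hsort : l.Pairwise (prio · < prio ·)) :
    memF q b (xi typ S) (xi typ (schurChoice q b typ S l ∅)) := by
  have hempty : Admissible q b typ S ∅ := by
    obtain ⟨x, hx⟩ := exists_memF (q := q) hb fun i => (Nat.cast_nonneg _ : (0 : ℤ) ≤ _)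
    exact ⟨x, hx, fun i => by simpa [xi] using hx.1.1 i⟩
  obtain ⟨x, hx, hCx⟩ := admissible_schurChoice hempty l
  suffices xi typ (schurChoice q b typ S l ∅) = x by rwa [this]
  by_contra hne
  obtain ⟨i, hi⟩ : ∃ i, xi typ (schurChoice q b typ S l ∅) i < x i := by
    by_contra! h
    exact hne (le_antisymm hCx h)
  obtain ⟨s, hsS, hsC, rfl⟩ := exists_mem_of_xi_lt typ (hi.trans_le (hx.1.2.1 i))
  refine hsC (mem_schurChoice_of_le hsort ((hl s).2 hsS) (filter_subset _ _) hx fun j => ?_)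
  have : xi typ (schurChoice q b typ S l ∅) j ≤ x j := hCx j
  simp only [Pi.add_apply, Pi.single_apply]
  split_ifs <;> subst_vars <;> omega

lemma card_filter_le_schurChoice (hb : ∑ i, b i = 0) (hl : ∀ s, s ∈ l ↔ s ∈ S)
    (hsort : l.Pairwise (prio · < prio ·)) {A : Finset σ} (hAS : A ⊆ S)
    (hA : memF q b (xi typ S) (xi typ A)) (p : ℕ) :
    #(A.filter (prio · < p)) ≤ #((schurChoice q b typ S l ∅).filter (prio · < p)) := by
  by_contra! hlt
  obtain ⟨i, hi, z, hz, hle⟩ := (memF_xi_schurChoice hb hl hsort).exists_add_single_le hA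
    (xi_mono typ (filter_subset _ _)) (xi_mono typ (filter_subset _ _))
    (by rw [sum_xi, sum_xi]; exact_mod_cast hlt)
  obtain ⟨s, hsV, hsU, rfl⟩ := exists_mem_of_xi_lt typ hi
  rw [mem_filter] at hsV
  refine hsU (mem_filter.2 ⟨mem_schurChoice_of_le hsort ((hl s).2 (hAS hsV.1))
    (fun c hc => ?_) hz hle, hsV.2⟩)
  rw [mem_filter] at hc ⊢
  exact ⟨hc.1, hc.2.trans hsV.2⟩

end SchurChoice

theorem stmt17_general {σ : Type} [DecidableEq σ] {n : ℕ} (q : ℕ)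
    (b : Fin n → ℝ) (hb : ∑ i, b i = 0) (typ : σ → Fin n)
    (prio : σ → ℕ) (hinj : Function.Injective prio)
    (S : Finset σ) (l : List σ) (hl : ∀ s, s ∈ l ↔ s ∈ S)
    (hsort : l.Pairwise fun s t => prio s < prio t)
    (C' : Finset σ → Finset σ) (hC'sub : ∀ A, C' A ⊆ A)
    (hC'card : ∀ A, (C' A).card ≤ q) :
    (C' S).card < (schurChoice q b typ S l ∅).card ∨
    smaj (Tb b (xi typ (C' S))) (Tb b (xi typ (schurChoice q b typ S l ∅))) ∨
    pdom prio (schurChoice q b typ S l ∅) (C' S) := by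
  set C := schurChoice q b typ S l ∅
  have hC : memF q b (xi typ S) (xi typ C) := memF_xi_schurChoice hb hl hsort
  have hC' := xi_memB typ (hC'sub S) (hC'card S)
  have hcard : (#(C' S) : ℤ) ≤ #C := by
    rw [← sum_xi, ← sum_xi, hC.sum_eq]
    exact hC'.sum_le_maxSize
  rcases hcard.lt_or_eq with hlt | heq
  · exact Or.inl (by exact_mod_cast hlt)
  have hsum : ∑ i, xi typ (C' S) i = maxSize q (xi typ S) := by
    rw [sum_xi, heq, ← sum_xi, hC.sum_eq]
  by_cases hback : maj (Tb b (xi typ C)) (Tb b (xi typ (C' S)))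
  · exact Or.inr (Or.inr (pdom_of_card_filter_le hinj
      (card_filter_le_schurChoice hb hl hsort (hC'sub S) (hC.of_maj hC' hsum hback))))
  · exact Or.inr (Or.inl ⟨hC.stable.maj_Tb hC' hsum, hback⟩)

/-- Comparison of the `b`-targeting Schur choice rule with any other choice
rule: the Schur rule admits more students, or a strictly more `b`-diverse
student body, or a priority-dominating one. -/
theorem stmt17 {σ : Type} [DecidableEq σ] {n : ℕ} (q : ℕ) (hq : 0 < q)
    (b : Fin n → ℝ) (hb : ∑ i, b i = 0) (typ : σ → Fin n)
    (prio : σ → ℕ) (hinj : Function.Injective prio)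
    (S : Finset σ) (l : List σ) (hl : ∀ s, s ∈ l ↔ s ∈ S)
    (hsort : l.Pairwise fun s t => prio s < prio t)
    (C' : Finset σ → Finset σ) (hC'sub : ∀ A, C' A ⊆ A)
    (hC'card : ∀ A, (C' A).card ≤ q)
    (hne : schurChoice q b typ S l ∅ ≠ C' S) :
    (C' S).card < (schurChoice q b typ S l ∅).card ∨
    smaj (Tb b (xi typ (C' S))) (Tb b (xi typ (schurChoice q b typ S l ∅))) ∨
    pdom prio (schurChoice q b typ S l ∅) (C' S) :=
  stmt17_general q b hb typ prio hinj S l hl hsort C' hC'sub hC'card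
end
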